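/- Let l be a positive integer, k_c > 0, ρ_d > 0, λ̲ > 0, and 0 < T₀ < T real numbers, θ* ∈ ℝ^l, and let Λ ∈ ℝ^{l×l} be a symmetric matrix with Λ ⪰ λ̲ I_l. Define V_c(θ,p,τ) := (1/4)|p−θ|² + (1/4)|p−θ*|² + (k_c ρ_d τ²/2)(θ−θ*)ᵀΛ(θ−θ*), and η := 1 − T₀²/T² − 1/(2k_cρ_dλ̲T²). Then for all θ, p ∈ ℝ^l, V_c(θ, θ, T₀) − V_c(θ, p, T) ≤ −η V_c(θ, p, T). Moreover, if in addition T² > T₀² + 1/(2k_cλ̲ρ_d), then η ∈ (0,1). -/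

import Mathlib

open Matrix

/-! Since `Λ ⪰ λ̲ I`, the term `|θ - θ*|² / 4` that the reset creates is at most
`(θ - θ*)ᵀ Λ (θ - θ*) / (4 λ̲)`, which is the share `1 / (2 k_c ρ_d λ̲ T²)` of the
quadratic term of `V_c` at `τ = T`; the remaining quadratic term at `τ = T₀` is the share
`T₀² / T²` of it. Hence `V_c` after the reset is at most `(1 - η) V_c` before it. -/

theorem reset_le_mul_lyapunov {μ lam T₀ T a b d Q : ℝ} (hμ : 0 < μ) (hlam : 0 < lam)
    (hT : T ≠ 0) (ha : 0 ≤ a) (hb : 0 ≤ b) (hQ : lam * d ≤ Q) :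
    1 / 4 * d + μ * T₀ ^ 2 / 2 * Q ≤
      (T₀ ^ 2 + 1 / (2 * μ * lam)) / T ^ 2 * (1 / 4 * a + 1 / 4 * b + μ * T ^ 2 / 2 * Q) := by
  have hd : d ≤ Q / lam := by rwa [le_div_iff₀ hlam, mul_comm]
  calc 1 / 4 * d + μ * T₀ ^ 2 / 2 * Q ≤ 1 / 4 * (Q / lam) + μ * T₀ ^ 2 / 2 * Q := by gcongr
    _ = (T₀ ^ 2 + 1 / (2 * μ * lam)) / T ^ 2 * (μ * T ^ 2 / 2 * Q) := by field_simp; ring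
    _ ≤ _ := by gcongr; linarith

theorem one_sub_div_mem_Ioo {c t : ℝ} (hc : 0 < c) (hct : c < t) : 1 - c / t ∈ Set.Ioo 0 1 := by
  have ht : 0 < t := hc.trans hct
  constructor
  · linarith [(div_lt_one ht).2 hct]
  · linarith [div_pos hc ht]

theorem stmt_9_general (l : ℕ) (k_c ρd lam T₀ T : ℝ)
    (hk : 0 < k_c) (hρd : 0 < ρd) (hlam : 0 < lam) (hT₀ : 0 < T₀) (hT : T₀ < T)
    (θstar : EuclideanSpace ℝ (Fin l))
    (Λ : Matrix (Fin l) (Fin l) ℝ)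
    (hΛ : ∀ θ : EuclideanSpace ℝ (Fin l), lam * ‖θ‖ ^ 2 ≤ θ ⬝ᵥ (Λ *ᵥ θ)) :
    let Vc : EuclideanSpace ℝ (Fin l) → EuclideanSpace ℝ (Fin l) → ℝ → ℝ := fun θ p τ =>
      (1 / 4) * ‖p - θ‖ ^ 2 + (1 / 4) * ‖p - θstar‖ ^ 2 +
        (k_c * ρd * τ ^ 2 / 2) * ((θ - θstar) ⬝ᵥ (Λ *ᵥ (θ - θstar)))
    let η : ℝ := 1 - T₀ ^ 2 / T ^ 2 - 1 / (2 * k_c * ρd * lam * T ^ 2)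
    (∀ θ p : EuclideanSpace ℝ (Fin l), Vc θ θ T₀ - Vc θ p T ≤ -η * Vc θ p T) ∧
      (T ^ 2 > T₀ ^ 2 + 1 / (2 * k_c * lam * ρd) → η ∈ Set.Ioo (0 : ℝ) 1) := by
  intro Vc η
  have hTne : T ≠ 0 := (hT₀.trans hT).ne'
  have hη : η = 1 - (T₀ ^ 2 + 1 / (2 * (k_c * ρd) * lam)) / T ^ 2 := by
    simp only [η]; field_simp; ring
  refine ⟨fun θ p => ?_, fun hTT₀ => ?_⟩
  · have key := reset_le_mul_lyapunov (a := ‖p - θ‖ ^ 2) (b := ‖p - θstar‖ ^ 2) (T₀ := T₀)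
      (mul_pos hk hρd) hlam hTne (by positivity) (by positivity) (hΛ (θ - θstar))
    simp only [Vc, sub_self, norm_zero, hη, norm_sub_rev θ θstar, WithLp.ofLp_sub] at key ⊢
    linear_combination key
  · rw [hη]
    refine one_sub_div_mem_Ioo (by positivity) ?_
    convert hTT₀ using 3; ring

/-- Inequality (A.8): the critic Lyapunov function contracts by a factor `1 − η`
across the resets `(θ,p,τ) ↦ (θ,θ,T₀)` of the hybrid critic dynamics. -/
theorem stmt_9 (l : ℕ) (hl : 0 < l) (k_c ρd lam T₀ T : ℝ)
    (hk : 0 < k_c) (hρd : 0 < ρd) (hlam : 0 < lam) (hT₀ : 0 < T₀) (hT : T₀ < T)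
    (θstar : EuclideanSpace ℝ (Fin l))
    (Λ : Matrix (Fin l) (Fin l) ℝ) (hΛsymm : Λ.IsSymm)
    (hΛ : ∀ θ : EuclideanSpace ℝ (Fin l), lam * ‖θ‖ ^ 2 ≤ θ ⬝ᵥ (Λ *ᵥ θ)) :
    let Vc : EuclideanSpace ℝ (Fin l) → EuclideanSpace ℝ (Fin l) → ℝ → ℝ := fun θ p τ =>
      (1 / 4) * ‖p - θ‖ ^ 2 + (1 / 4) * ‖p - θstar‖ ^ 2 +
        (k_c * ρd * τ ^ 2 / 2) * ((θ - θstar) ⬝ᵥ (Λ *ᵥ (θ - θstar)))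
    let η : ℝ := 1 - T₀ ^ 2 / T ^ 2 - 1 / (2 * k_c * ρd * lam * T ^ 2)
    (∀ θ p : EuclideanSpace ℝ (Fin l), Vc θ θ T₀ - Vc θ p T ≤ -η * Vc θ p T) ∧
      (T ^ 2 > T₀ ^ 2 + 1 / (2 * k_c * lam * ρd) → η ∈ Set.Ioo (0 : ℝ) 1) :=
  stmt_9_general l k_c ρd lam T₀ T hk hρd hlam hT₀ hT θstar Λ hΛ
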